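/- Let λ ∈ (0, 1). Let N ≥ 1 and let (y_k)_{k≥0} and (l_k)_{k≥1} be sequences of vectors in ℝ^N with y_0 = 0 and y_{k+1} = λ(2y_k − y_{k−1} + l_k) for all k ≥ 1. Then for every K ≥ 1, Σ_{k=1}^{K} ‖y_k‖² ≤ (2/(1 − λ)²) · ‖y_1‖² + (2λ²/((1 − λ)(1 − √λ)²)) · Σ_{s=1}^{K−1} ‖l_s‖². -/

import Mathlib

/-!
Let `g` be the impulse response of `z (k + 1) = λ (2 z k - z (k - 1))`, i.e. `g 0 = 0`, `g 1 = 1`.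
Then `y (k + 1) = g (k + 1) y 1 + λ ∑_{j < k} g (j + 1) l (k - j)`. The quadratic form
`(a - λ b)² + λ (1 - λ) b²` of two consecutive terms `(a, b)` is multiplied by `λ` at each step,
so `√(1 - λ) |g (k + 1)| ≤ √λ ^ k`. Squaring the resulting bound on `‖y (k + 1)‖`, the `y 1` part
sums to a geometric series, and the `l` part is a convolution with the kernel `√λ ^ j`, whose sum
of squares Young's inequality `‖w ∗ x‖₂ ≤ ‖w‖₁ ‖x‖₂` controls.
-/

open Finset

theorem sum_Icc_one_eq_sum_range {M : Type*} [AddCommMonoid M] (f : ℕ → M) (n : ℕ) :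
    ∑ i ∈ Icc 1 n, f i = ∑ i ∈ range n, f (i + 1) := by
  rw [range_eq_Ico, sum_Ico_add' f 0 n 1]; rfl

theorem geom_sum_le_inv_one_sub {x : ℝ} (hx0 : 0 ≤ x) (hx1 : x < 1) (n : ℕ) :
    ∑ i ∈ range n, x ^ i ≤ (1 - x)⁻¹ := by
  simpa [← range_eq_Ico] using geom_sum_Ico_le_of_lt_one (m := 0) (n := n) hx0 hx1

theorem sum_sq_sum_range_succ_mul_le {w : ℕ → ℝ} (hw : ∀ j, 0 ≤ w j) (x : ℕ → ℝ) (n : ℕ) :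
    ∑ m ∈ range n, (∑ k ∈ range (m + 1), w k * x (m - k)) ^ 2 ≤
      (∑ k ∈ range n, w k) ^ 2 * ∑ m ∈ range n, x m ^ 2 := by
  set W := ∑ k ∈ range n, w k
  have hW : 0 ≤ W := sum_nonneg fun k _ => hw k
  have hcs : ∀ m ∈ range n, (∑ k ∈ range (m + 1), w k * x (m - k)) ^ 2 ≤
      W * ∑ k ∈ range (m + 1), w k * x (m - k) ^ 2 := by
    intro m hm
    refine (sum_sq_le_sum_mul_sum_of_sq_le_mul _ (g := fun k => w k * x (m - k) ^ 2)
      (fun k _ => hw k) (fun k _ => mul_nonneg (hw k) (sq_nonneg _))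
      fun k _ => le_of_eq (by ring)).trans ?_
    refine mul_le_mul_of_nonneg_right ?_ (sum_nonneg fun k _ => mul_nonneg (hw k) (sq_nonneg _))
    exact sum_le_sum_of_subset_of_nonneg (range_subset_range.2 (mem_range.1 hm))
      fun k _ _ => hw k
  calc ∑ m ∈ range n, (∑ k ∈ range (m + 1), w k * x (m - k)) ^ 2
      ≤ W * ∑ m ∈ range n, ∑ k ∈ range (m + 1), w k * x (m - k) ^ 2 := by
        rw [mul_sum]; exact sum_le_sum hcs
    _ = W * ∑ m ∈ range n, w m * ∑ k ∈ range (n - m), x k ^ 2 := by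
        rw [sum_range_diag_flip n fun k i => w k * x i ^ 2]
        simp only [mul_sum]
    _ ≤ W * ∑ m ∈ range n, w m * ∑ k ∈ range n, x k ^ 2 := by
        refine mul_le_mul_of_nonneg_left (sum_le_sum fun m _ => ?_) hW
        exact mul_le_mul_of_nonneg_left (sum_le_sum_of_subset_of_nonneg
          (range_subset_range.2 (Nat.sub_le n m)) fun _ _ _ => sq_nonneg _) (hw m)
    _ = W ^ 2 * ∑ m ∈ range n, x m ^ 2 := by rw [← sum_mul]; ring

theorem sum_sq_sum_range_mul_le {w : ℕ → ℝ} (hw : ∀ j, 0 ≤ w j) (x : ℕ → ℝ) (n : ℕ) :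
    ∑ m ∈ range (n + 1), (∑ k ∈ range m, w k * x (m - k)) ^ 2 ≤
      (∑ k ∈ range n, w k) ^ 2 * ∑ s ∈ Icc 1 n, x s ^ 2 := by
  have hshift : ∀ m, ∑ k ∈ range (m + 1), w k * x (m + 1 - k) =
      ∑ k ∈ range (m + 1), w k * x (m - k + 1) := fun m =>
    sum_congr rfl fun k hk => by rw [Nat.sub_add_comm (Nat.lt_succ_iff.1 (mem_range.1 hk))]
  rw [sum_range_succ', range_zero, sum_empty, sum_Icc_one_eq_sum_range]
  simpa only [hshift, ne_eq, OfNat.ofNat_ne_zero, not_false_eq_true, zero_pow, add_zero]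
    using sum_sq_sum_range_succ_mul_le hw (fun s => x (s + 1)) n

def impulseResponse {R : Type*} [CommRing R] (lam : R) : ℕ → R
  | 0 => 0
  | 1 => 1
  | k + 2 => lam * (2 * impulseResponse lam (k + 1) - impulseResponse lam k)

section CommRing

variable {R : Type*} [CommRing R] (lam : R)

@[simp] theorem impulseResponse_zero : impulseResponse lam 0 = 0 := rfl

@[simp] theorem impulseResponse_one : impulseResponse lam 1 = 1 := rfl

theorem impulseResponse_add_two (k : ℕ) :
    impulseResponse lam (k + 2) =
      lam * (2 * impulseResponse lam (k + 1) - impulseResponse lam k) := rfl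

theorem impulseResponse_energy (k : ℕ) :
    (impulseResponse lam (k + 1) - lam * impulseResponse lam k) ^ 2 +
      lam * (1 - lam) * impulseResponse lam k ^ 2 = lam ^ k := by
  induction k with
  | zero => simp
  | succ k ih =>
    rw [impulseResponse_add_two, pow_succ]
    linear_combination lam * ih

end CommRing

theorem one_sub_mul_impulseResponse_sq_le {lam : ℝ} (hlam : 0 < lam) (k : ℕ) :
    (1 - lam) * impulseResponse lam (k + 1) ^ 2 ≤ lam ^ k := by
  have h := impulseResponse_energy lam (k + 1)
  have hsq := sq_nonneg (impulseResponse lam (k + 1 + 1) - lam * impulseResponse lam (k + 1))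
  refine le_of_mul_le_mul_left ?_ hlam
  rw [pow_succ lam k] at h
  linarith

theorem abs_impulseResponse_mul_sqrt_le {lam : ℝ} (hlam : 0 < lam) (k : ℕ) :
    |impulseResponse lam (k + 1)| * √(1 - lam) ≤ √lam ^ k := by
  calc |impulseResponse lam (k + 1)| * √(1 - lam)
      = √(impulseResponse lam (k + 1) ^ 2 * (1 - lam)) := by
        rw [Real.sqrt_mul (sq_nonneg _), Real.sqrt_sq_eq_abs]
    _ ≤ √(lam ^ k) :=
        Real.sqrt_le_sqrt (by linarith [one_sub_mul_impulseResponse_sq_le hlam k])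
    _ = √lam ^ k := by
        rw [Real.sqrt_eq_iff_eq_sq (by positivity) (by positivity), ← pow_mul, mul_comm,
          pow_mul, Real.sq_sqrt hlam.le]

section Module

variable {R E : Type*} [CommRing R] [AddCommGroup E] [Module R E]

theorem sum_impulseResponse_smul_add_two (lam : R) (l : ℕ → E) (k : ℕ) :
    ∑ j ∈ range (k + 2), impulseResponse lam (j + 1) • l (k + 2 - j) =
      lam • ((2 : R) • ∑ j ∈ range (k + 1), impulseResponse lam (j + 1) • l (k + 1 - j) -
        ∑ j ∈ range k, impulseResponse lam (j + 1) • l (k - j)) + l (k + 2) := by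
  have hlow : ∑ j ∈ range (k + 1), impulseResponse lam j • l (k + 1 - j) =
      ∑ j ∈ range k, impulseResponse lam (j + 1) • l (k - j) := by
    simp [sum_range_succ']
  rw [sum_range_succ', ← hlow, smul_sum, ← sum_sub_distrib, smul_sum]
  simp only [impulseResponse_add_two, zero_add, impulseResponse_one, one_smul]
  congr 1
  refine sum_congr rfl fun j _ => ?_
  rw [show k + 2 - (j + 1) = k + 1 - j by omega]
  module

theorem eq_impulseResponse_smul_add_sum {lam : R} {y l : ℕ → E} (hy0 : y 0 = 0)
    (hrec : ∀ k, 1 ≤ k → y (k + 1) = lam • ((2 : R) • y k - y (k - 1) + l k)) (k : ℕ) :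
    y (k + 1) = impulseResponse lam (k + 1) • y 1 +
      lam • ∑ j ∈ range k, impulseResponse lam (j + 1) • l (k - j) := by
  induction k using Nat.twoStepInduction with
  | zero => simp
  | one =>
    rw [hrec 1 le_rfl, impulseResponse_add_two]
    simp only [Nat.sub_self, zero_add, hy0, range_one, sum_singleton, impulseResponse_one,
      impulseResponse_zero]
    module
  | more k ih₀ ih₁ =>
    rw [show k + 1 + 1 = k + 2 from rfl] at ih₁
    rw [hrec (k + 2) (by omega), show k + 2 - 1 = k + 1 from rfl, ih₀, ih₁,
      sum_impulseResponse_smul_add_two, show k + 2 + 1 = k + 1 + 2 from rfl,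
      impulseResponse_add_two lam (k + 1)]
    module

end Module

theorem sqrt_one_sub_mul_norm_le {E : Type*} [NormedAddCommGroup E] [NormedSpace ℝ E]
    {lam : ℝ} (hlam : 0 < lam) {y l : ℕ → E} (hy0 : y 0 = 0)
    (hrec : ∀ k, 1 ≤ k → y (k + 1) = lam • ((2 : ℝ) • y k - y (k - 1) + l k)) (k : ℕ) :
    √(1 - lam) * ‖y (k + 1)‖ ≤
      √lam ^ k * ‖y 1‖ + lam * ∑ j ∈ range k, √lam ^ j * ‖l (k - j)‖ := by
  set g := impulseResponse lam
  set S := ∑ j ∈ range k, g (j + 1) • l (k - j)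
  have hS : √(1 - lam) * ‖S‖ ≤ ∑ j ∈ range k, √lam ^ j * ‖l (k - j)‖ :=
    calc √(1 - lam) * ‖S‖ ≤ √(1 - lam) * ∑ j ∈ range k, |g (j + 1)| * ‖l (k - j)‖ := by
          gcongr
          refine (norm_sum_le _ _).trans_eq (sum_congr rfl fun j _ => ?_)
          rw [norm_smul, Real.norm_eq_abs]
      _ = ∑ j ∈ range k, (|g (j + 1)| * √(1 - lam)) * ‖l (k - j)‖ := by
          rw [mul_sum]
          exact sum_congr rfl fun j _ => by ring
      _ ≤ ∑ j ∈ range k, √lam ^ j * ‖l (k - j)‖ := by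
          gcongr with j
          exact abs_impulseResponse_mul_sqrt_le hlam j
  calc √(1 - lam) * ‖y (k + 1)‖
      ≤ √(1 - lam) * (|g (k + 1)| * ‖y 1‖ + lam * ‖S‖) := by
        rw [eq_impulseResponse_smul_add_sum hy0 hrec k]
        gcongr
        refine (norm_add_le _ _).trans_eq ?_
        rw [norm_smul, norm_smul, Real.norm_eq_abs, Real.norm_eq_abs, abs_of_pos hlam]
    _ = (|g (k + 1)| * √(1 - lam)) * ‖y 1‖ + lam * (√(1 - lam) * ‖S‖) := by ring
    _ ≤ √lam ^ k * ‖y 1‖ + lam * ∑ j ∈ range k, √lam ^ j * ‖l (k - j)‖ := by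
        gcongr
        exact abs_impulseResponse_mul_sqrt_le hlam k

section Normed

variable {E : Type*} [NormedAddCommGroup E] [NormedSpace ℝ E] {lam : ℝ} {y l : ℕ → E}

theorem one_sub_mul_norm_sq_le (hlam0 : 0 < lam) (hlam1 : lam ≤ 1) (hy0 : y 0 = 0)
    (hrec : ∀ k, 1 ≤ k → y (k + 1) = lam • ((2 : ℝ) • y k - y (k - 1) + l k)) (k : ℕ) :
    (1 - lam) * ‖y (k + 1)‖ ^ 2 ≤
      2 * ‖y 1‖ ^ 2 * lam ^ k + 2 * lam ^ 2 * (∑ j ∈ range k, √lam ^ j * ‖l (k - j)‖) ^ 2 := by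
  set c := ∑ j ∈ range k, √lam ^ j * ‖l (k - j)‖
  calc (1 - lam) * ‖y (k + 1)‖ ^ 2 = (√(1 - lam) * ‖y (k + 1)‖) ^ 2 := by
        rw [mul_pow, Real.sq_sqrt (by linarith)]
    _ ≤ (√lam ^ k * ‖y 1‖ + lam * c) ^ 2 :=
        pow_le_pow_left₀ (by positivity) (sqrt_one_sub_mul_norm_le hlam0 hy0 hrec k) 2
    _ ≤ 2 * ((√lam ^ k * ‖y 1‖) ^ 2 + (lam * c) ^ 2) := add_sq_le
    _ = 2 * ‖y 1‖ ^ 2 * lam ^ k + 2 * lam ^ 2 * c ^ 2 := by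
        rw [mul_pow, ← pow_mul, mul_comm k 2, pow_mul, Real.sq_sqrt hlam0.le]; ring

theorem one_sub_mul_sum_norm_sq_le (hlam0 : 0 < lam) (hlam1 : lam < 1) (hy0 : y 0 = 0)
    (hrec : ∀ k, 1 ≤ k → y (k + 1) = lam • ((2 : ℝ) • y k - y (k - 1) + l k)) (n : ℕ) :
    (1 - lam) * ∑ k ∈ Icc 1 (n + 1), ‖y k‖ ^ 2 ≤
      2 * ‖y 1‖ ^ 2 * (1 - lam)⁻¹ +
        2 * lam ^ 2 * ((1 - √lam)⁻¹ ^ 2 * ∑ s ∈ Icc 1 n, ‖l s‖ ^ 2) := by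
  have hsqrt1 : √lam < 1 := (Real.sqrt_lt' one_pos).2 (by simpa using hlam1)
  calc (1 - lam) * ∑ k ∈ Icc 1 (n + 1), ‖y k‖ ^ 2
      ≤ ∑ k ∈ range (n + 1), (2 * ‖y 1‖ ^ 2 * lam ^ k +
          2 * lam ^ 2 * (∑ j ∈ range k, √lam ^ j * ‖l (k - j)‖) ^ 2) := by
        rw [sum_Icc_one_eq_sum_range, mul_sum]
        exact sum_le_sum fun k _ => one_sub_mul_norm_sq_le hlam0 hlam1.le hy0 hrec k
    _ = 2 * ‖y 1‖ ^ 2 * ∑ k ∈ range (n + 1), lam ^ k +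
          2 * lam ^ 2 * ∑ k ∈ range (n + 1), (∑ j ∈ range k, √lam ^ j * ‖l (k - j)‖) ^ 2 := by
        rw [sum_add_distrib, mul_sum, mul_sum]
    _ ≤ _ := by
        gcongr
        · exact geom_sum_le_inv_one_sub hlam0.le hlam1 _
        · refine (sum_sq_sum_range_mul_le (w := (√lam ^ ·)) (fun j => by positivity)
            (‖l ·‖) n).trans ?_
          gcongr
          exact geom_sum_le_inv_one_sub (Real.sqrt_nonneg _) hsqrt1 n

end Normed

theorem stmt_11_general (lam : ℝ) (hlam : lam ∈ Set.Ioo (0 : ℝ) 1)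
    (N : ℕ)
    (y : ℕ → EuclideanSpace ℝ (Fin N)) (l : ℕ → EuclideanSpace ℝ (Fin N))
    (hy0 : y 0 = 0)
    (hrec : ∀ k, 1 ≤ k → y (k + 1) = lam • ((2 : ℝ) • y k - y (k - 1) + l k))
    (K : ℕ) (hK : 1 ≤ K) :
    ∑ k ∈ Finset.Icc 1 K, ‖y k‖ ^ 2 ≤ (2 / (1 - lam) ^ 2) * ‖y 1‖ ^ 2 +
      (2 * lam ^ 2 / ((1 - lam) * (1 - Real.sqrt lam) ^ 2)) *
        ∑ s ∈ Finset.Icc 1 (K - 1), ‖l s‖ ^ 2 := by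
  obtain ⟨hlam0, hlam1⟩ := hlam
  obtain ⟨n, rfl⟩ : ∃ n, K = n + 1 := ⟨K - 1, by omega⟩
  have hlam' : 0 < 1 - lam := by linarith
  have hsqrt' : 0 < 1 - √lam := sub_pos.2 ((Real.sqrt_lt' one_pos).2 (by simpa using hlam1))
  rw [Nat.add_sub_cancel, ← mul_le_mul_iff_of_pos_left hlam']
  refine (one_sub_mul_sum_norm_sq_le hlam0 hlam1 hy0 hrec n).trans_eq ?_
  field_simp

theorem stmt_11 (lam : ℝ) (hlam : lam ∈ Set.Ioo (0 : ℝ) 1)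
    (N : ℕ) (hN : 1 ≤ N)
    (y : ℕ → EuclideanSpace ℝ (Fin N)) (l : ℕ → EuclideanSpace ℝ (Fin N))
    (hy0 : y 0 = 0)
    (hrec : ∀ k, 1 ≤ k → y (k + 1) = lam • ((2 : ℝ) • y k - y (k - 1) + l k))
    (K : ℕ) (hK : 1 ≤ K) :
    ∑ k ∈ Finset.Icc 1 K, ‖y k‖ ^ 2 ≤ (2 / (1 - lam) ^ 2) * ‖y 1‖ ^ 2 +
      (2 * lam ^ 2 / ((1 - lam) * (1 - Real.sqrt lam) ^ 2)) *
        ∑ s ∈ Finset.Icc 1 (K - 1), ‖l s‖ ^ 2 :=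
  stmt_11_general lam hlam N y l hy0 hrec K hK
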